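/- Fix the linear order E < D < N on steps. For a bad Delannoy path W from (0,0) to (n,n) with l steps, let w_k be the first step of maximal depth (where the depth after step i is #N's minus #E's among the first i steps), and let φ(W) be obtained by replacing w_k with E. Then φ is a bijection from bad paths in Del(n,n,l) onto Del(n+1,n-1,l), and maj(W) = maj(φ(W)) + 1 for all bad W. -/

import Mathlib

inductive Step : Type
  | E | D | N
deriving DecidableEq

instance instFintypeStep : Fintype Step :=
  ⟨{Step.E, Step.D, Step.N}, fun x => by cases x <;> simp⟩

open Step Polynomial

/-- All words of length `l` over the step alphabet. -/
def Words (l : ℕ) : Finset (List Step) :=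
  (Finset.univ : Finset (Fin l → Step)).image List.ofFn

/-- Delannoy paths from (0,0) to (m,n) with `l` steps, encoded as words:
`#E + #D = m`, `#N + #D = n`, length `l`. -/
def DelSet (m n l : ℕ) : Finset (List Step) :=
  (Words l).filter fun w => w.count E + w.count D = m ∧ w.count N + w.count D = n

/-- A word is bad if some prefix contains more N's than E's. -/
def bad (w : List Step) : Bool :=
  (List.range (w.length + 1)).any fun k => (w.take k).count E < (w.take k).count N

/-- Bad Delannoy paths from (0,0) to (n,n) with `l` steps. -/
def BDelSet (n l : ℕ) : Finset (List Step) :=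
  (DelSet n n l).filter fun w => bad w

/-- Schröder paths: Delannoy paths to (n,n) never going above the diagonal. -/
def SchSet (n l : ℕ) : Finset (List Step) :=
  (DelSet n n l).filter fun w => ¬ bad w

/-- Major index of a word w_1 ⋯ w_l with respect to a ranking of the letters:
the sum of all positions i (1 ≤ i ≤ l-1) with w_i > w_{i+1}. -/
def maj (rank : Step → ℕ) (w : List Step) : ℕ :=
  ∑ i ∈ Finset.range (w.length - 1),
    if rank (w.getD (i + 1) E) < rank (w.getD i E) then i + 1 else 0

/-- q-integer [m] = 1 + q + ⋯ + q^{m-1}. -/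
noncomputable def qint (m : ℕ) : Polynomial ℚ :=
  ∑ i ∈ Finset.range m, X ^ i

/-- q-factorial. -/
noncomputable def qfact : ℕ → Polynomial ℚ
  | 0 => 1
  | m + 1 => qfact m * qint (m + 1)

/-- Gaussian binomial coefficient, via the q-Pascal recurrence. -/
noncomputable def qbinom : ℕ → ℕ → Polynomial ℚ
  | _, 0 => 1
  | 0, _ + 1 => 0
  | m + 1, k + 1 => qbinom m k + X ^ (k + 1) * qbinom m (k + 1)

/-- q-trinomial coefficient [l]!/([a]![b]![c]!), defined when a+b+c = l. -/
noncomputable def qbinom3 (l a b c : ℕ) : Polynomial ℚ :=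
  if a + b + c = l then qbinom l a * qbinom (l - a) b else 0

/-- Depth after the first `i` steps: #N − #E. -/
def depth (w : List Step) (i : ℕ) : ℤ :=
  ((w.take i).count N : ℤ) - (w.take i).count E

/-- `k` (0 ≤ k ≤ l) achieves the maximal running depth. -/
def isMaxDepth (w : List Step) (k : ℕ) : Bool :=
  (List.range (w.length + 1)).all fun i => decide (depth w i ≤ depth w k)

/-- The first index (number of steps) at which the running depth is maximal. -/
def firstDeep (w : List Step) : ℕ :=
  (List.range (w.length + 1)).findIdx (isMaxDepth w)

/-- The last index at which the running depth is maximal. -/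
def lastDeep (w : List Step) : ℕ :=
  w.length - (List.range (w.length + 1)).reverse.findIdx (isMaxDepth w)

/-- Replace the first deepest step (the step w_k, k = firstDeep) with E. -/
def phi (w : List Step) : List Step := w.set (firstDeep w - 1) E

/-- Replace the step following the last deepest point with N. -/
def phiInv (w : List Step) : List Step := w.set (lastDeep w) N

/-- Number of consecutive D's immediately after the first deepest step. -/
def runS (w : List Step) : ℕ := ((w.drop (firstDeep w)).takeWhile (· == D)).length

/-- Number of consecutive D's immediately before the first deepest step. -/
def runR (w : List Step) : ℕ :=
  ((w.take (firstDeep w - 1)).reverse.takeWhile (· == D)).length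

/-- The window map: replace W₁ = D^r w_k D^s by D^{r-1} E D^{s+1} if r ≥ 1,
and by D^s E if r = 0. -/
def phiWin (w : List Step) : List Step :=
  let k := firstDeep w - 1
  let r := runR w
  let s := runS w
  let seg : List Step :=
    if 1 ≤ r then List.replicate (r - 1) D ++ [E] ++ List.replicate (s + 1) D
    else List.replicate s D ++ [E]
  w.take (k - r) ++ seg ++ w.drop (k + s + 1)

/-- 0-based index of the first step after which the path is above the diagonal. -/
def firstAbove (w : List Step) : ℕ :=
  (List.range w.length).findIdx fun i =>
    decide ((w.take (i + 1)).count E < (w.take (i + 1)).count N)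

/-- The map ψ of Bonin–Shapiro–Simion: replace with E the last N of the maximal
run of consecutive N's beginning at the first step going above the diagonal. -/
def psi (w : List Step) : List Step :=
  let i := firstAbove w
  let j := i + ((w.drop i).takeWhile (· == N)).length - 1
  w.set j E

/-!
The depth profile of a bad path `W` first reaches its maximum `M > 0` after `k` steps, so
`w_k = N`. Turning `w_k` into `E` lowers the profile after `k - 1` by two, which makes `k - 1`
(at height `M - 1`) the last maximum of `φ(W)`. Conversely, in a path ending at depth `-2` the
step after the last maximum is an `E`, and turning it into `N` creates the first maximum just
after it; so `phiInv` inverts `φ`. Maximality gives `w_{k+1} ≠ N` and minimality of `k` gives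
`w_{k-1} ≠ E`, so the descent `w_k > w_{k+1}` at `k` becomes the descent `w_{k-1} > E` at
`k - 1` while all other descents stay: `maj` drops by exactly one.
-/

namespace Step

def rise : Step → ℤ
  | E => -1
  | D => 0
  | N => 1

theorem rise_pos_iff {a : Step} : 0 < a.rise ↔ a = N := by
  cases a <;> simp [rise]

theorem rise_neg_iff {a : Step} : a.rise < 0 ↔ a = E := by
  cases a <;> simp [rise]

end Step

section Letters

variable {w : List Step} {p i : ℕ}

theorem getD_set_of_lt (a d : Step) (hp : p < w.length) :
    (w.set p a).getD i d = if i = p then a else w.getD i d := by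
  rw [List.getD_eq_getElem?_getD, List.getD_eq_getElem?_getD, List.getElem?_set]
  by_cases h : i = p
  · simp [h, hp]
  · simp [h, Ne.symm h]

theorem set_getD_self {a : Step} (hp : p < w.length) (ha : w.getD p E = a) :
    w.set p a = w := by
  rw [List.getD_eq_getElem _ _ hp] at ha
  exact ha ▸ List.set_getElem_self hp

theorem count_set_add {a b : Step} (c : Step) (hp : p < w.length) (ha : w.getD p E = a) :
    (w.set p b).count c + (if a = c then 1 else 0) =
      w.count c + (if b = c then 1 else 0) := by
  rw [List.getD_eq_getElem _ _ hp] at ha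
  have hpos : 0 < w.count a := List.count_pos_iff.2 (ha ▸ List.getElem_mem hp)
  rw [List.count_set hp, ha]
  simp only [beq_iff_eq]
  split_ifs <;> subst_vars <;> omega

end Letters

section Membership

variable {w : List Step} {l : ℕ}

theorem mem_Words : w ∈ Words l ↔ w.length = l := by
  simp only [Words, Finset.mem_image, Finset.mem_univ, true_and]
  exact ⟨fun ⟨f, hf⟩ => hf ▸ List.length_ofFn,
    fun h => ⟨fun i => w[i], by subst h; simp⟩⟩

theorem mem_DelSet {m n : ℕ} : w ∈ DelSet m n l ↔
    w.length = l ∧ w.count E + w.count D = m ∧ w.count N + w.count D = n := by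
  rw [DelSet, Finset.mem_filter, mem_Words]

end Membership

section Depth

variable {w : List Step} {i p : ℕ}

theorem depth_zero (w : List Step) : depth w 0 = 0 := by simp [depth]

theorem depth_length (w : List Step) : depth w w.length = w.count N - w.count E := by
  simp [depth]

theorem depth_succ (h : i < w.length) : depth w (i + 1) = depth w i + (w.getD i E).rise := by
  rw [List.getD_eq_getElem _ _ h]
  simp only [depth, List.take_add_one, List.getElem?_eq_getElem h, Option.toList_some,
    List.count_append, List.count_singleton]
  cases w[i] <;> simp [Step.rise] <;> ring

theorem depth_length_of_mem_DelSet {m n l : ℕ} (hw : w ∈ DelSet m n l) :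
    depth w w.length = (n : ℤ) - m := by
  rw [mem_DelSet] at hw
  rw [depth_length]
  omega

theorem bad_iff : bad w = true ↔ ∃ k ≤ w.length, 0 < depth w k := by
  simp only [bad, depth, List.any_eq_true, List.mem_range, Nat.lt_succ_iff, decide_eq_true_eq,
    sub_pos, Nat.cast_lt]

theorem depth_set_of_le (a : Step) (hi : i ≤ p) : depth (w.set p a) i = depth w i := by
  rw [depth, depth, List.take_set, List.set_eq_of_length_le (by simp [hi])]

theorem depth_set_of_lt (a : Step) (hp : p < w.length) (hi : p < i) :
    depth (w.set p a) i = depth w i - (w.getD p E).rise + a.rise := by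
  have hpi : p < (w.take i).length := by simp; omega
  have hget : (w.take i).getD p E = w.getD p E := by
    simp [List.getD_eq_getElem?_getD, hi]
  generalize w.getD p E = b at hget
  have hN := count_set_add (b := a) N hpi hget
  have hE := count_set_add (b := a) E hpi hget
  simp only [depth, List.take_set]
  cases b <;> cases a <;> simp [Step.rise] at hN hE ⊢ <;> omega

end Depth

section DeepestPoint

variable {w : List Step} {j k : ℕ}

theorem isMaxDepth_iff : isMaxDepth w k = true ↔ ∀ i ≤ w.length, depth w i ≤ depth w k := by
  simp [isMaxDepth]

theorem exists_isMaxDepth (w : List Step) :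
    ∃ k ∈ List.range (w.length + 1), isMaxDepth w k := by
  obtain ⟨k, hk, hmax⟩ := Finset.exists_max_image (Finset.range (w.length + 1)) (depth w)
    ⟨0, by simp⟩
  exact ⟨k, by simpa using hk,
    isMaxDepth_iff.2 fun i hi => hmax i (by simpa [Nat.lt_succ_iff] using hi)⟩

theorem isMaxDepth_eq_false_iff (hk : k ≤ w.length) (hmax : isMaxDepth w k = true) :
    isMaxDepth w j = false ↔ depth w j < depth w k := by
  rw [← Bool.not_eq_true, isMaxDepth_iff]
  push Not
  exact ⟨fun ⟨i, hi, hlt⟩ => hlt.trans_le (isMaxDepth_iff.1 hmax i hi),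
    fun h => ⟨k, hk, h⟩⟩

theorem firstDeep_eq_iff : firstDeep w = k ↔
    k ≤ w.length ∧ (∀ i ≤ w.length, depth w i ≤ depth w k) ∧
      ∀ j < k, depth w j < depth w k := by
  have hlt := List.findIdx_lt_length_of_exists (exists_isMaxDepth w)
  have hle : firstDeep w ≤ w.length := by
    rw [List.length_range] at hlt; exact Nat.le_of_lt_succ hlt
  constructor
  · rintro rfl
    have hspec := (List.findIdx_eq hlt).1 rfl
    simp only [List.getElem_range] at hspec
    refine ⟨hle, isMaxDepth_iff.1 hspec.1, fun j hj => ?_⟩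
    exact (isMaxDepth_eq_false_iff hle hspec.1).1 (hspec.2 j hj)
  · rintro ⟨hk, hmax, hstrict⟩
    rw [firstDeep, List.findIdx_eq (by simp; omega)]
    simp only [List.getElem_range]
    exact ⟨isMaxDepth_iff.2 hmax, fun j hj =>
      (isMaxDepth_eq_false_iff hk (isMaxDepth_iff.2 hmax)).2 (hstrict j hj)⟩

theorem lastDeep_eq_iff : lastDeep w = k ↔
    k ≤ w.length ∧ (∀ i ≤ w.length, depth w i ≤ depth w k) ∧
      ∀ j, k < j → j ≤ w.length → depth w j < depth w k := by
  set L := (List.range (w.length + 1)).reverse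
  have hL : ∀ i (h : i < L.length), L[i] = w.length - i := by
    intro i h
    simp [L]
  have hlt : L.findIdx (isMaxDepth w) < L.length := by
    obtain ⟨k, hk, hmax⟩ := exists_isMaxDepth w
    exact List.findIdx_lt_length_of_exists ⟨k, List.mem_reverse.2 hk, hmax⟩
  have hLlen : L.length = w.length + 1 := by simp [L]
  have hlast : lastDeep w = w.length - L.findIdx (isMaxDepth w) := rfl
  constructor
  · intro hk
    have hspec := (List.findIdx_eq hlt).1 rfl
    rw [hL, ← hlast, hk] at hspec
    refine ⟨by omega, isMaxDepth_iff.1 hspec.1, fun j hkj hj => ?_⟩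
    have := hspec.2 (w.length - j) (by omega)
    rw [hL, Nat.sub_sub_self hj] at this
    exact (isMaxDepth_eq_false_iff (by omega) hspec.1).1 this
  · rintro ⟨hk, hmax, hstrict⟩
    suffices L.findIdx (isMaxDepth w) = w.length - k by omega
    rw [List.findIdx_eq (by omega), hL, Nat.sub_sub_self hk]
    refine ⟨isMaxDepth_iff.2 hmax, fun j hj => ?_⟩
    rw [hL]
    exact (isMaxDepth_eq_false_iff hk (isMaxDepth_iff.2 hmax)).2
      (hstrict _ (by omega) (by omega))

end DeepestPoint

section FirstDeepest

variable {w : List Step}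

theorem firstDeep_le_length (w : List Step) : firstDeep w ≤ w.length :=
  (firstDeep_eq_iff.1 rfl).1

theorem bad_iff_firstDeep_pos : bad w = true ↔ 0 < firstDeep w := by
  obtain ⟨hle, hmax, hstrict⟩ := firstDeep_eq_iff.1 (rfl : firstDeep w = _)
  rw [bad_iff]
  constructor
  · rintro ⟨k, hk, hpos⟩
    refine Nat.pos_of_ne_zero fun h0 => ?_
    have := hmax k hk
    rw [h0, depth_zero] at this
    omega
  · intro hpos
    exact ⟨firstDeep w, hle, depth_zero w ▸ hstrict 0 hpos⟩

theorem firstDeep_lt_length (hpos : 0 < firstDeep w) (hend : depth w w.length ≤ 0) :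
    firstDeep w < w.length := by
  obtain ⟨hle, -, hstrict⟩ := firstDeep_eq_iff.1 (rfl : firstDeep w = _)
  refine hle.lt_of_ne fun h => ?_
  have := hstrict 0 hpos
  rw [depth_zero, h] at this
  omega

theorem getD_firstDeep_sub_one (hpos : 0 < firstDeep w) :
    w.getD (firstDeep w - 1) E = N := by
  obtain ⟨hle, -, hstrict⟩ := firstDeep_eq_iff.1 (rfl : firstDeep w = _)
  have hstep := depth_succ (w := w) (i := firstDeep w - 1) (by omega)
  rw [Nat.sub_add_cancel hpos] at hstep
  have := hstrict (firstDeep w - 1) (by omega)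
  exact Step.rise_pos_iff.1 (by omega)

theorem depth_firstDeep_sub_one (hpos : 0 < firstDeep w) :
    depth w (firstDeep w - 1) = depth w (firstDeep w) - 1 := by
  have hstep := depth_succ (w := w) (i := firstDeep w - 1)
    (by have := firstDeep_le_length w; omega)
  rw [Nat.sub_add_cancel hpos, getD_firstDeep_sub_one hpos] at hstep
  simp only [Step.rise] at hstep
  omega

theorem getD_firstDeep_ne_N (hlt : firstDeep w < w.length) : w.getD (firstDeep w) E ≠ N := by
  obtain ⟨-, hmax, -⟩ := firstDeep_eq_iff.1 (rfl : firstDeep w = _)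
  have hstep := depth_succ hlt
  have := hmax (firstDeep w + 1) hlt
  exact fun h => absurd (Step.rise_pos_iff.2 h) (by omega)

theorem getD_firstDeep_sub_two_ne_E (h2 : 2 ≤ firstDeep w) :
    w.getD (firstDeep w - 2) E ≠ E := by
  obtain ⟨hle, -, hstrict⟩ := firstDeep_eq_iff.1 (rfl : firstDeep w = _)
  have hstep := depth_succ (w := w) (i := firstDeep w - 2) (by omega)
  rw [show firstDeep w - 2 + 1 = firstDeep w - 1 by omega,
    depth_firstDeep_sub_one (by omega)] at hstep
  have := hstrict (firstDeep w - 2) (by omega)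
  exact fun h => absurd (Step.rise_neg_iff.2 h) (by omega)

theorem lastDeep_phi (hpos : 0 < firstDeep w) : lastDeep (phi w) = firstDeep w - 1 := by
  obtain ⟨hle, hmax, hstrict⟩ := firstDeep_eq_iff.1 (rfl : firstDeep w = _)
  set k := firstDeep w
  have hbefore : ∀ i ≤ k - 1, depth (phi w) i = depth w i := fun i hi => depth_set_of_le E hi
  have hafter : ∀ i, k - 1 < i → depth (phi w) i = depth w i - 2 := fun i hi => by
    rw [phi, depth_set_of_lt E (by omega) hi, getD_firstDeep_sub_one hpos]
    simp only [Step.rise]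
    ring
  have hpeak : depth (phi w) (k - 1) = depth w k - 1 := by
    rw [hbefore _ le_rfl, depth_firstDeep_sub_one hpos]
  rw [lastDeep_eq_iff, phi, List.length_set]
  refine ⟨by omega, fun i hi => ?_, fun j hj hjl => ?_⟩
  · rw [← phi, hpeak]
    rcases le_or_gt i (k - 1) with h | h
    · rw [hbefore i h]
      have := hstrict i (by omega)
      omega
    · rw [hafter i h]
      have := hmax i hi
      omega
  · rw [← phi, hpeak, hafter j hj]
    have := hmax j hjl
    omega

theorem phiInv_phi (hpos : 0 < firstDeep w) : phiInv (phi w) = w := by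
  rw [phiInv, lastDeep_phi hpos, phi, List.set_set]
  exact set_getD_self (by have := firstDeep_le_length w; omega) (getD_firstDeep_sub_one hpos)

end FirstDeepest

section LastDeepest

variable {w : List Step}

theorem lastDeep_lt_length (hend : depth w w.length < 0) : lastDeep w < w.length := by
  obtain ⟨hle, hmax, -⟩ := lastDeep_eq_iff.1 (rfl : lastDeep w = _)
  refine hle.lt_of_ne fun h => ?_
  have := hmax 0 (Nat.zero_le _)
  rw [depth_zero, h] at this
  omega

theorem getD_lastDeep (hlt : lastDeep w < w.length) : w.getD (lastDeep w) E = E := by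
  obtain ⟨-, -, hstrict⟩ := lastDeep_eq_iff.1 (rfl : lastDeep w = _)
  have hstep := depth_succ hlt
  have := hstrict (lastDeep w + 1) (by omega) hlt
  exact Step.rise_neg_iff.1 (by omega)

theorem firstDeep_phiInv (hlt : lastDeep w < w.length) :
    firstDeep (phiInv w) = lastDeep w + 1 := by
  obtain ⟨hle, hmax, hstrict⟩ := lastDeep_eq_iff.1 (rfl : lastDeep w = _)
  set j := lastDeep w
  have hbefore : ∀ i ≤ j, depth (phiInv w) i = depth w i := fun i hi => depth_set_of_le N hi
  have hafter : ∀ i, j < i → depth (phiInv w) i = depth w i + 2 := fun i hi => by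
    rw [phiInv, depth_set_of_lt N hlt hi, getD_lastDeep hlt]
    simp only [Step.rise]
    ring
  have hpeak : depth (phiInv w) (j + 1) = depth w j + 1 := by
    have hstep := depth_succ hlt
    rw [getD_lastDeep hlt] at hstep
    simp only [Step.rise] at hstep
    rw [hafter _ (by omega), hstep]
    ring
  rw [firstDeep_eq_iff, phiInv, List.length_set]
  refine ⟨by omega, fun i hi => ?_, fun i hi => ?_⟩
  · rw [← phiInv, hpeak]
    rcases le_or_gt i j with h | h
    · rw [hbefore i h]
      have := hmax i (by omega)
      omega
    · rw [hafter i h]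
      have := hstrict i h hi
      omega
  · rw [← phiInv, hpeak, hbefore i (by omega)]
    have := hmax i (by omega)
    omega

theorem phi_phiInv (hlt : lastDeep w < w.length) : phi (phiInv w) = w := by
  rw [phi, firstDeep_phiInv hlt, Nat.add_sub_cancel, phiInv, List.set_set]
  exact set_getD_self hlt (getD_lastDeep hlt)

end LastDeepest

section Maj

variable (rank : Step → ℕ) (hED : rank E < rank D) (hDN : rank D < rank N)
include hED hDN

theorem maj_set_E_add_one {w : List Step} {p : ℕ} (hp : p + 1 < w.length)
    (hN : w.getD p E = N) (hnext : w.getD (p + 1) E ≠ N)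
    (hprev : 0 < p → w.getD (p - 1) E ≠ E) :
    maj rank w = maj rank (w.set p E) + 1 := by
  have hmin : ∀ a, ¬ rank a < rank E := fun a => by cases a <;> omega
  have hmax : ∀ a, ¬ rank N < rank a := fun a => by cases a <;> omega
  have hE_lt : ∀ a, a ≠ E → rank E < rank a := fun a ha => by
    cases a <;> first | omega | contradiction
  have hlt_N : ∀ a, a ≠ N → rank a < rank N := fun a ha => by
    cases a <;> first | omega | contradiction
  have hget := fun i => getD_set_of_lt (i := i) E E (by omega : p < w.length)
  -- The descent at `p` (weight `p + 1`) moves to `p - 1` (weight `p`); the correction terms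
  -- keep both sides free of subtraction.
  have hterm : ∀ i,
      (if rank (w.getD (i + 1) E) < rank (w.getD i E) then i + 1 else 0) +
          (if i + 1 = p then p else 0) =
        (if rank ((w.set p E).getD (i + 1) E) < rank ((w.set p E).getD i E) then i + 1 else 0) +
          (if i = p then p + 1 else 0) := by
    intro i
    rw [hget, hget]
    by_cases hi : i = p
    · subst hi
      simp only [hN, if_pos (hlt_N _ hnext), if_neg (hmin _), Nat.succ_ne_self, ↓reduceIte]
      omega
    by_cases hi' : i + 1 = p
    · subst hi'
      have hprev := hprev (Nat.succ_pos i)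
      rw [Nat.add_sub_cancel] at hprev
      simp only [hN, if_neg (hmax _), if_pos (hE_lt _ hprev), hi, ↓reduceIte]
      omega
    · simp [hi, hi']
  have hsum : ∑ i ∈ Finset.range (w.length - 1), (if i + 1 = p then p else 0) = p := by
    rcases p with _ | p
    · simp
    · simp [Finset.sum_ite_eq', show p < w.length - 1 by omega]
  have hsum' : ∑ i ∈ Finset.range (w.length - 1), (if i = p then p + 1 else 0) = p + 1 := by
    simp [Finset.sum_ite_eq', show p < w.length - 1 by omega]
  have := Finset.sum_congr rfl fun i (_ : i ∈ Finset.range (w.length - 1)) => hterm i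
  rw [Finset.sum_add_distrib, Finset.sum_add_distrib, hsum, hsum'] at this
  simp only [maj, List.length_set]
  omega

theorem maj_phi {w : List Step} (hpos : 0 < firstDeep w) (hlt : firstDeep w < w.length) :
    maj rank w = maj rank (phi w) + 1 := by
  have hsucc : firstDeep w - 1 + 1 = firstDeep w := Nat.sub_add_cancel hpos
  refine maj_set_E_add_one rank hED hDN (by omega) (getD_firstDeep_sub_one hpos)
    (hsucc ▸ getD_firstDeep_ne_N hlt) fun h => ?_
  rw [Nat.sub_sub]
  exact getD_firstDeep_sub_two_ne_E (by omega)

end Maj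

section PathSets

variable {w : List Step} {n l : ℕ}

theorem phi_mem_DelSet (hw : w ∈ BDelSet n l) : phi w ∈ DelSet (n + 1) (n - 1) l := by
  rw [BDelSet, Finset.mem_filter, mem_DelSet] at hw
  obtain ⟨⟨hlen, hEDn, hNDn⟩, hbad⟩ := hw
  have hpos := bad_iff_firstDeep_pos.1 hbad
  have hp : firstDeep w - 1 < w.length := by have := firstDeep_le_length w; omega
  have hN := getD_firstDeep_sub_one hpos
  have hE := count_set_add (b := E) E hp hN
  have hD := count_set_add (b := E) D hp hN
  have hN' := count_set_add (b := E) N hp hN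
  simp only [reduceCtorEq, if_true, if_false] at hE hD hN'
  rw [mem_DelSet, phi, List.length_set]
  omega

theorem phiInv_mem_BDelSet (hn : 1 ≤ n) (hw : w ∈ DelSet (n + 1) (n - 1) l) :
    phiInv w ∈ BDelSet n l := by
  have hlt := lastDeep_lt_length (by rw [depth_length_of_mem_DelSet hw]; omega)
  rw [mem_DelSet] at hw
  obtain ⟨hlen, hEDn, hNDn⟩ := hw
  have hE' := getD_lastDeep hlt
  have hE := count_set_add (b := N) E hlt hE'
  have hD := count_set_add (b := N) D hlt hE'
  have hN := count_set_add (b := N) N hlt hE'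
  simp only [reduceCtorEq, if_true, if_false] at hE hD hN
  rw [BDelSet, Finset.mem_filter, mem_DelSet, bad_iff_firstDeep_pos, firstDeep_phiInv hlt,
    phiInv, List.length_set]
  omega

end PathSets

theorem phi_bijOn_EDN_general (n l : ℕ) (hn : 1 ≤ n)
    (rank : Step → ℕ)
    (hED : rank E < rank D) (hDN : rank D < rank N) :
    Set.BijOn phi (BDelSet n l : Set (List Step)) (DelSet (n + 1) (n - 1) l : Set (List Step)) ∧
      ∀ w ∈ BDelSet n l, maj rank w = maj rank (phi w) + 1 := by
  have hbad : ∀ w ∈ BDelSet n l, 0 < firstDeep w := fun w hw =>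
    bad_iff_firstDeep_pos.1 (Finset.mem_filter.1 hw).2
  refine ⟨Set.InvOn.bijOn ⟨fun w hw => phiInv_phi (hbad w hw), fun v hv => phi_phiInv ?_⟩
    (fun w hw => phi_mem_DelSet hw) (fun v hv => phiInv_mem_BDelSet hn hv),
    fun w hw => maj_phi rank hED hDN (hbad w hw) ?_⟩
  · exact lastDeep_lt_length (by rw [depth_length_of_mem_DelSet hv]; omega)
  · refine firstDeep_lt_length (hbad w hw) ?_
    rw [depth_length_of_mem_DelSet (Finset.mem_filter.1 hw).1, sub_self]

/-- for the order E < D < N, replacing the first deepest step of a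
bad path with E is a bijection from bad paths in Del(n,n,l) onto
Del(n+1,n-1,l), and maj(W) = maj(φ(W)) + 1. -/
theorem phi_bijOn_EDN (n l : ℕ) (hn : 1 ≤ n)
    (rank : Step → ℕ) (hrank : Function.Injective rank)
    (hED : rank E < rank D) (hDN : rank D < rank N) :
    Set.BijOn phi (BDelSet n l : Set (List Step)) (DelSet (n + 1) (n - 1) l : Set (List Step)) ∧
      ∀ w ∈ BDelSet n l, maj rank w = maj rank (phi w) + 1 :=
  phi_bijOn_EDN_general n l hn rank hED hDN
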